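/- arXiv:0906.4477 — 5 statements merged into one kernel-verified Lean document; each statement's English description precedes it below -/
import Mathlib

section
/- For real parameters λ₁, λ₂, λ₃ satisfying λ₁λ₂λ₃ + λ₁ + λ₂ + λ₃ = 0, every matrix in the 3-parameter family Q_C given by the symmetric 4×4 matrix with zero diagonal and entries S₁₂ = x₁, S₁₃ = x₂, S₁₄ = x₃, S₂₃ = λ₃x₃, S₂₄ = λ₂x₂, S₃₄ = λ₁x₁ has trace zero and traceless cube, i.e., all odd symmetric polynomials of its eigenvalues vanish. -/
open Matrix

/-- Every matrix in the family Q_C (with λ₁λ₂λ₃ + λ₁ + λ₂ + λ₃ = 0) has zero trace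
and traceless cube, so all odd symmetric polynomials of its eigenvalues vanish. -/
theorem stmt_2 (l1 l2 l3 x1 x2 x3 : ℝ) (h : l1 * l2 * l3 + l1 + l2 + l3 = 0) :
    (!![0, x1, x2, x3;
        x1, 0, l3 * x3, l2 * x2;
        x2, l3 * x3, 0, l1 * x1;
        x3, l2 * x2, l1 * x1, 0] : Matrix (Fin 4) (Fin 4) ℝ).trace = 0 ∧
    ((!![0, x1, x2, x3;
        x1, 0, l3 * x3, l2 * x2;
        x2, l3 * x3, 0, l1 * x1;
        x3, l2 * x2, l1 * x1, 0] : Matrix (Fin 4) (Fin 4) ℝ) ^ 3).trace = 0 := by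
  constructor
  · simp [Matrix.trace, Matrix.diag, Fin.sum_univ_four]
  · rw [pow_succ, pow_two]
    simp only [Matrix.trace, Matrix.diag, Fin.sum_univ_four, Matrix.mul_apply, Fin.sum_univ_four]
    simp only [Matrix.of_apply, Matrix.cons_val', Matrix.cons_val_zero, Matrix.cons_val_one,
      Matrix.head_cons, Matrix.empty_val', Matrix.cons_val_fin_one, Matrix.head_fin_const,
      Matrix.cons_val_two, Matrix.tail_cons, Matrix.cons_val_three]
    linear_combination 6 * x1 * x2 * x3 * h
end

section
/- The prolongation of Q_B is zero: if P is a trilinear tensor P_{ijk} on R^4, symmetric in all three indices, such that for each fixed k the matrix (P_{ijk})_{ij} lies in Q_B = {[[m I, B],[Bᵀ, -m I]]}, then P = 0. -/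
open Matrix

/-- The prolongation of Q_B is zero: a totally symmetric 3-tensor on R⁴ all of whose
single-index slices lie in Q_B = {[[m I, B],[Bᵀ, -m I]]} must vanish. -/
theorem stmt_5 (P : (Fin 2 ⊕ Fin 2) → (Fin 2 ⊕ Fin 2) → (Fin 2 ⊕ Fin 2) → ℝ)
    (hsym1 : ∀ i j k, P i j k = P j i k) (hsym2 : ∀ i j k, P i j k = P i k j)
    (hQB : ∀ k, ∃ (m : ℝ) (B : Matrix (Fin 2) (Fin 2) ℝ),
      (Matrix.of fun i j => P i j k) =
        Matrix.fromBlocks (m • (1 : Matrix (Fin 2) (Fin 2) ℝ)) B Bᵀ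
          (-(m • (1 : Matrix (Fin 2) (Fin 2) ℝ)))) :
    P = 0 := by
  -- Extract the block structure of each slice.
  have facts : ∀ k, (∀ i j : Fin 2, i ≠ j →
      P (Sum.inl i) (Sum.inl j) k = 0 ∧ P (Sum.inr i) (Sum.inr j) k = 0) ∧
      (∀ i j : Fin 2, P (Sum.inl i) (Sum.inl i) k = P (Sum.inl j) (Sum.inl j) k ∧
        P (Sum.inr i) (Sum.inr i) k = - P (Sum.inl j) (Sum.inl j) k) := by
    intro k
    obtain ⟨m, B, h⟩ := hQB k
    have h11 : ∀ i j : Fin 2, P (Sum.inl i) (Sum.inl j) k = if i = j then m else 0 := by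
      intro i j
      have := congrFun (congrFun h (Sum.inl i)) (Sum.inl j)
      simpa [Matrix.fromBlocks, Matrix.one_apply, mul_ite] using this
    have h22 : ∀ i j : Fin 2, P (Sum.inr i) (Sum.inr j) k = -(if i = j then m else 0) := by
      intro i j
      have := congrFun (congrFun h (Sum.inr i)) (Sum.inr j)
      simpa [Matrix.fromBlocks, Matrix.one_apply, mul_ite] using this
    refine ⟨fun i j hij => ⟨by simp [h11, hij], by simp [h22, hij]⟩, fun i j => ?_⟩
    constructor
    · simp [h11]
    · simp [h22, h11]
  -- Off-diagonal vanishing within a block.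
  have L3 : ∀ (k) (i j : Fin 2), i ≠ j → P (Sum.inl i) (Sum.inl j) k = 0 :=
    fun k i j h => ((facts k).1 i j h).1
  have L4 : ∀ (k) (i j : Fin 2), i ≠ j → P (Sum.inr i) (Sum.inr j) k = 0 :=
    fun k i j h => ((facts k).1 i j h).2
  -- Diagonal entries vanish: m(k) = 0 for all k.
  have L1 : ∀ (k) (i : Fin 2), P (Sum.inl i) (Sum.inl i) k = 0 := by
    have hm : ∀ k, P (Sum.inl 0) (Sum.inl 0) k = 0 := by
      intro k
      match k with
      | Sum.inl l =>
        -- pick i ≠ l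
        rcases exists_ne l with ⟨i, hi⟩
        rw [((facts (Sum.inl l)).2 0 i).1, hsym2, L3 _ i l hi]
      | Sum.inr l =>
        rcases exists_ne l with ⟨j, hj⟩
        have := ((facts (Sum.inr l)).2 j 0).2
        -- P (inr j)(inr j)(inr l) = - P (inl 0)(inl 0)(inr l)
        have hz : P (Sum.inr j) (Sum.inr j) (Sum.inr l) = 0 := by
          rw [hsym2, L4 _ j l hj]
        linarith [this, hz]
    intro k i
    rw [((facts k).2 i 0).1, hm]
  have L2 : ∀ (k) (i : Fin 2), P (Sum.inr i) (Sum.inr i) k = 0 := by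
    intro k i
    rw [((facts k).2 i 0).2, L1, neg_zero]
  -- Mixed entries vanish.
  have L5 : ∀ (i j : Fin 2) (k), P (Sum.inl i) (Sum.inr j) k = 0 := by
    intro i j k
    match k with
    | Sum.inl l =>
      have e : P (Sum.inl i) (Sum.inr j) (Sum.inl l)
          = P (Sum.inl i) (Sum.inl l) (Sum.inr j) := hsym2 _ _ _
      rw [e]
      rcases eq_or_ne i l with rfl | h
      · exact L1 _ _
      · exact L3 _ i l h
    | Sum.inr l =>
      have e : P (Sum.inl i) (Sum.inr j) (Sum.inr l)
          = P (Sum.inr j) (Sum.inr l) (Sum.inl i) :=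
        (hsym1 _ _ _).trans (hsym2 _ _ _)
      rw [e]
      rcases eq_or_ne j l with rfl | h
      · exact L2 _ _
      · exact L4 _ j l h
  -- Conclude.
  funext i j k
  show P i j k = 0
  match i, j with
  | Sum.inl a, Sum.inl b =>
    rcases eq_or_ne a b with rfl | h
    · exact L1 k a
    · exact L3 k a b h
  | Sum.inr a, Sum.inr b =>
    rcases eq_or_ne a b with rfl | h
    · exact L2 k a
    · exact L4 k a b h
  | Sum.inl a, Sum.inr b => exact L5 a b k
  | Sum.inr a, Sum.inl b => rw [hsym1]; exact L5 b a k
end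

section
/- For any fixed real parameters λ₁, λ₂, λ₃, the prolongation of Q_C is zero: if P_{ijk} is a totally symmetric 3-tensor on R^4 such that for each k the symmetric matrix (P_{ijk})_{ij} lies in Q_C (i.e., has zero diagonal and satisfies the Q_C linear relations among off-diagonal entries), then P = 0. -/
open Matrix

/-- For any fixed real parameters λ₁, λ₂, λ₃, the prolongation of Q_C is zero: a totally
symmetric 3-tensor on R⁴ all of whose single-index slices lie in Q_C must vanish. -/
theorem stmt_6 (l1 l2 l3 : ℝ) (P : Fin 4 → Fin 4 → Fin 4 → ℝ)
    (hsym1 : ∀ i j k, P i j k = P j i k) (hsym2 : ∀ i j k, P i j k = P i k j)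
    (hQC : ∀ k, ∃ x1 x2 x3 : ℝ,
      (Matrix.of fun i j => P i j k) =
        !![0, x1, x2, x3;
           x1, 0, l3 * x3, l2 * x2;
           x2, l3 * x3, 0, l1 * x1;
           x3, l2 * x2, l1 * x1, 0]) :
    P = 0 := by
  have hd : ∀ i k, P i i k = 0 := by
    intro i k
    obtain ⟨x1, x2, x3, h⟩ := hQC k
    have h' := congrFun (congrFun h i) i
    fin_cases i <;> simpa using h'
  have hd2 : ∀ i j, P i j i = 0 := fun i j => (hsym2 i j i).trans (hd i j)
  have hd3 : ∀ i j, P i j j = 0 := fun i j => (hsym1 i j j).trans (hd2 j i)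
  -- distinct-index components from slice 0
  have z1 : P 1 2 0 = 0 := by
    obtain ⟨x1, x2, x3, h⟩ := hQC 0
    have e1 := congrFun (congrFun h 1) 2
    have e2 := congrFun (congrFun h 0) 3
    simp only [Matrix.of_apply] at e1 e2
    have hx3 : x3 = 0 := by
      have := hd2 0 3
      rw [e2] at this; simpa using this
    rw [show ((1:Fin 4)) = (1:Fin 4) from rfl] at e1
    simp [hx3] at e1
    simpa using e1
  have z2 : P 1 3 0 = 0 := by
    obtain ⟨x1, x2, x3, h⟩ := hQC 0
    have e1 := congrFun (congrFun h 1) 3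
    have e2 := congrFun (congrFun h 0) 2
    simp only [Matrix.of_apply] at e1 e2
    have hx2 : x2 = 0 := by
      have := hd2 0 2
      rw [e2] at this; simpa using this
    simp [hx2] at e1
    simpa using e1
  have z3 : P 2 3 0 = 0 := by
    obtain ⟨x1, x2, x3, h⟩ := hQC 0
    have e1 := congrFun (congrFun h 2) 3
    have e2 := congrFun (congrFun h 0) 1
    simp only [Matrix.of_apply] at e1 e2
    have hx1 : x1 = 0 := by
      have := hd2 0 1
      rw [e2] at this; simpa using this
    simp [hx1] at e1
    simpa using e1
  have z4 : P 2 3 1 = 0 := by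
    obtain ⟨x1, x2, x3, h⟩ := hQC 1
    have e1 := congrFun (congrFun h 2) 3
    have e2 := congrFun (congrFun h 0) 1
    simp only [Matrix.of_apply] at e1 e2
    have hx1 : x1 = 0 := by
      have := hd3 0 1
      rw [e2] at this; simpa using this
    simp [hx1] at e1
    simpa using e1
  -- permutations
  have cyc : ∀ i j k, P i j k = P j k i := fun i j k => (hsym1 i j k).trans (hsym2 j i k)
  -- now show every slice is entirely zero
  funext i j k
  show P i j k = 0
  fin_cases k
  · obtain ⟨x1, x2, x3, h⟩ := hQC 0
    have e1 := congrFun (congrFun h 0) 1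
    have e2 := congrFun (congrFun h 0) 2
    have e3 := congrFun (congrFun h 0) 3
    simp only [Matrix.of_apply] at e1 e2 e3
    have hx1 : x1 = 0 := by have := hd2 0 1; rw [e1] at this; simpa using this
    have hx2 : x2 = 0 := by have := hd2 0 2; rw [e2] at this; simpa using this
    have hx3 : x3 = 0 := by have := hd2 0 3; rw [e3] at this; simpa using this
    subst hx1 hx2 hx3
    have h' := congrFun (congrFun h i) j
    fin_cases i <;> fin_cases j <;> simpa using h'
  · obtain ⟨x1, x2, x3, h⟩ := hQC 1
    have e1 := congrFun (congrFun h 0) 1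
    have e2 := congrFun (congrFun h 0) 2
    have e3 := congrFun (congrFun h 0) 3
    simp only [Matrix.of_apply] at e1 e2 e3
    have hx1 : x1 = 0 := by have := hd3 0 1; rw [e1] at this; simpa using this
    have hx2 : x2 = 0 := by
      have : P 0 2 1 = 0 := by rw [cyc, hsym1, z1]
      rw [e2] at this; simpa using this
    have hx3 : x3 = 0 := by
      have : P 0 3 1 = 0 := by rw [cyc, hsym1, z2]
      rw [e3] at this; simpa using this
    subst hx1 hx2 hx3
    have h' := congrFun (congrFun h i) j
    fin_cases i <;> fin_cases j <;> simpa using h'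
  · obtain ⟨x1, x2, x3, h⟩ := hQC 2
    have e1 := congrFun (congrFun h 0) 1
    have e2 := congrFun (congrFun h 0) 2
    have e3 := congrFun (congrFun h 0) 3
    simp only [Matrix.of_apply] at e1 e2 e3
    have hx1 : x1 = 0 := by
      have : P 0 1 2 = 0 := by rw [cyc, z1]
      rw [e1] at this; simpa using this
    have hx2 : x2 = 0 := by have := hd3 0 2; rw [e2] at this; simpa using this
    have hx3 : x3 = 0 := by
      have : P 0 3 2 = 0 := by rw [hsym2, cyc, z3]
      rw [e3] at this; simpa using this
    subst hx1 hx2 hx3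
    have h' := congrFun (congrFun h i) j
    fin_cases i <;> fin_cases j <;> simpa using h'
  · obtain ⟨x1, x2, x3, h⟩ := hQC 3
    have e1 := congrFun (congrFun h 0) 1
    have e2 := congrFun (congrFun h 0) 2
    have e3 := congrFun (congrFun h 0) 3
    simp only [Matrix.of_apply] at e1 e2 e3
    have hx1 : x1 = 0 := by
      have : P 0 1 3 = 0 := by rw [cyc, z2]
      rw [e1] at this; simpa using this
    have hx2 : x2 = 0 := by
      have : P 0 2 3 = 0 := by rw [cyc, z3]
      rw [e2] at this; simpa using this
    have hx3 : x3 = 0 := by have := hd3 0 3; rw [e3] at this; simpa using this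
    subst hx1 hx2 hx3
    have h' := congrFun (congrFun h i) j
    fin_cases i <;> fin_cases j <;> simpa using h'
end

section
/- The prolongation of Q_A has dimension 8: the space of totally symmetric 3-tensors P_{ijk} on R^4 such that for each fixed k the matrix (P_{ijk})_{ij} anticommutes with J = [[0,-I₂],[I₂,0]] is an 8-dimensional real vector space. -/
open Matrix

/-- The complex structure J on R⁴, in blocks [[0,-I₂],[I₂,0]]. -/
def Jmat : Matrix (Fin 4) (Fin 4) ℝ :=
  !![0, 0, -1, 0;
     0, 0, 0, -1;
     1, 0, 0, 0;
     0, 1, 0, 0]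

def tbl (c : Fin 8 → ℝ) : Fin 4 → Fin 4 → Fin 4 → ℝ :=
  ![![![-c 0, -c 2, -c 1, -c 3], ![-c 2, -c 4, -c 3, -c 6], ![-c 1, -c 3, c 0, c 2], ![-c 3, -c 6, c 2, c 4]],
    ![![-c 2, -c 4, -c 3, -c 6], ![-c 4, -c 5, -c 6, -c 7], ![-c 3, -c 6, c 2, c 4], ![-c 6, -c 7, c 4, c 5]],
    ![![-c 1, -c 3, c 0, c 2], ![-c 3, -c 6, c 2, c 4], ![c 0, c 2, c 1, c 3], ![c 2, c 4, c 3, c 6]],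
    ![![-c 3, -c 6, c 2, c 4], ![-c 6, -c 7, c 4, c 5], ![c 2, c 4, c 3, c 6], ![c 4, c 5, c 6, c 7]]]

def prolQ : Submodule ℝ (Fin 4 → Fin 4 → Fin 4 → ℝ) where
  carrier := {P | (∀ i j k, P i j k = P j i k) ∧ (∀ i j k, P i j k = P i k j) ∧
      ∀ k, (Matrix.of fun i j => P i j k) * Jmat = -(Jmat * Matrix.of fun i j => P i j k)}
  add_mem' := by
    rintro P Q ⟨p1, p2, p3⟩ ⟨q1, q2, q3⟩
    refine ⟨fun i j k => by simp only [Pi.add_apply]; rw [p1 i j k, q1 i j k],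
            fun i j k => by simp only [Pi.add_apply]; rw [p2 i j k, q2 i j k], fun k => ?_⟩
    have h : (Matrix.of fun i j => (P + Q) i j k)
        = (Matrix.of fun i j => P i j k) + (Matrix.of fun i j => Q i j k) := rfl
    rw [h, add_mul, mul_add, p3 k, q3 k, neg_add]
  zero_mem' := by
    refine ⟨fun _ _ _ => rfl, fun _ _ _ => rfl, fun k => ?_⟩
    have h : (Matrix.of fun i j => (0 : Fin 4 → Fin 4 → Fin 4 → ℝ) i j k)
        = (0 : Matrix (Fin 4) (Fin 4) ℝ) := rfl
    rw [h]; simp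
  smul_mem' := by
    rintro a P ⟨p1, p2, p3⟩
    refine ⟨fun i j k => by simp only [Pi.smul_apply, smul_eq_mul]; rw [p1 i j k],
            fun i j k => by simp only [Pi.smul_apply, smul_eq_mul]; rw [p2 i j k], fun k => ?_⟩
    have h : (Matrix.of fun i j => (a • P) i j k) = a • (Matrix.of fun i j => P i j k) := rfl
    rw [h, smul_mul_assoc, Matrix.mul_smul, p3 k, smul_neg]

set_option maxHeartbeats 2000000 in
lemma tbl_mem (c : Fin 8 → ℝ) : tbl c ∈ prolQ := by
  refine ⟨?_, ?_, ?_⟩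
  · intro i j k; fin_cases i <;> fin_cases j <;> fin_cases k <;> rfl
  · intro i j k; fin_cases i <;> fin_cases j <;> fin_cases k <;> rfl
  · intro k
    have hM : (Matrix.of fun i j => tbl c i j k) =
        !![tbl c 0 0 k, tbl c 0 1 k, tbl c 0 2 k, tbl c 0 3 k;
           tbl c 1 0 k, tbl c 1 1 k, tbl c 1 2 k, tbl c 1 3 k;
           tbl c 2 0 k, tbl c 2 1 k, tbl c 2 2 k, tbl c 2 3 k;
           tbl c 3 0 k, tbl c 3 1 k, tbl c 3 2 k, tbl c 3 3 k] := by
      ext i j; fin_cases i <;> fin_cases j <;> rfl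
    rw [hM]
    fin_cases k <;>
      · ext i j
        fin_cases i <;> fin_cases j <;>
          simp [Matrix.mul_apply, Jmat, tbl, Fin.sum_univ_four, Matrix.vecHead, Matrix.vecTail]
set_option maxHeartbeats 2000000 in
lemma recon (P : Fin 4 → Fin 4 → Fin 4 → ℝ) (hP : P ∈ prolQ) (c : Fin 8 → ℝ)
    (hc0 : c 0 = P 2 2 0) (hc1 : c 1 = P 2 2 2) (hc2 : c 2 = P 3 2 0) (hc3 : c 3 = P 3 2 2)
    (hc4 : c 4 = P 3 3 0) (hc5 : c 5 = P 3 3 1) (hc6 : c 6 = P 3 3 2) (hc7 : c 7 = P 3 3 3) :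
    tbl c = P := by
  obtain ⟨h1, h2, h3⟩ := hP
  have hR1 : ∀ k : Fin 4, P 2 2 k = -P 0 0 k := by
    intro k
    have h := congrFun (congrFun (h3 k) 2) 0
    simp [Matrix.mul_apply, Jmat, Fin.sum_univ_four, Matrix.vecHead, Matrix.vecTail] at h
    linarith
  have hR2 : ∀ k : Fin 4, P 2 3 k = -P 0 1 k := by
    intro k
    have h := congrFun (congrFun (h3 k) 2) 1
    simp [Matrix.mul_apply, Jmat, Fin.sum_univ_four, Matrix.vecHead, Matrix.vecTail] at h
    linarith
  have hR3 : ∀ k : Fin 4, P 3 2 k = -P 1 0 k := by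
    intro k
    have h := congrFun (congrFun (h3 k) 3) 0
    simp [Matrix.mul_apply, Jmat, Fin.sum_univ_four, Matrix.vecHead, Matrix.vecTail] at h
    linarith
  have hR4 : ∀ k : Fin 4, P 3 3 k = -P 1 1 k := by
    intro k
    have h := congrFun (congrFun (h3 k) 3) 1
    simp [Matrix.mul_apply, Jmat, Fin.sum_univ_four, Matrix.vecHead, Matrix.vecTail] at h
    linarith
  funext i j k
  fin_cases i <;> fin_cases j <;> fin_cases k <;> simp [tbl]
  all_goals linarith [hc0, hc1, hc2, hc3, hc4, hc5, hc6, hc7, h1 0 1 1, h1 0 2 0, h1 0 2 1, h1 0 2 2, h1 0 2 3, h1 0 3 0, h1 0 3 1, h1 0 3 2, h1 0 3 3, h1 1 2 0, h1 1 2 1, h1 1 2 2, h1 1 2 3, h1 1 3 0, h1 1 3 1, h1 1 3 2, h1 1 3 3, h1 2 3 0, h1 2 3 2, h1 2 3 3, h2 0 0 1, h2 0 0 2, h2 0 0 3, h2 0 1 2, h2 0 1 3, h2 1 0 1, h2 1 0 2, h2 1 0 3, h2 1 1 2, h2 1 1 3, h2 2 0 2, h2 2 0 3, h2 2 1 2,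 h2 2 1 3, h2 2 2 3, h2 3 0 2, h2 3 0 3, h2 3 1 2, h2 3 1 3, h2 3 2 3, hR1 0, hR1 1, hR1 2, hR1 3, hR2 0, hR2 1, hR2 2, hR2 3, hR3 0, hR3 1, hR3 2, hR3 3, hR4 0, hR4 1, hR4 2, hR4 3]

def pickL : (Fin 4 → Fin 4 → Fin 4 → ℝ) →ₗ[ℝ] (Fin 8 → ℝ) where
  toFun P := ![P 2 2 0, P 2 2 2, P 3 2 0, P 3 2 2, P 3 3 0, P 3 3 1, P 3 3 2, P 3 3 3]
  map_add' P Q := by funext m; fin_cases m <;> rfl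
  map_smul' a P := by funext m; fin_cases m <;> rfl

noncomputable def eqv : prolQ ≃ₗ[ℝ] (Fin 8 → ℝ) :=
  { pickL.comp prolQ.subtype with
    invFun := fun c => ⟨tbl c, tbl_mem c⟩
    left_inv := fun P => Subtype.ext (recon P.1 P.2 _ rfl rfl rfl rfl rfl rfl rfl rfl)
    right_inv := fun c => by funext m; fin_cases m <;> rfl }

/-- The prolongation of Q_A has dimension 8: the totally symmetric 3-tensors on R⁴
whose slices anticommute with J form an 8-dimensional real vector space. -/
theorem stmt_7 : ∃ W : Submodule ℝ (Fin 4 → Fin 4 → Fin 4 → ℝ),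
    (∀ P, P ∈ W ↔
      ((∀ i j k, P i j k = P j i k) ∧ (∀ i j k, P i j k = P i k j) ∧
        ∀ k, (Matrix.of fun i j => P i j k) * Jmat =
          -(Jmat * Matrix.of fun i j => P i j k))) ∧
    Module.finrank ℝ W = 8 := by
  refine ⟨prolQ, fun P => Iff.rfl, ?_⟩
  rw [eqv.finrank_eq]
  simp
end

section
/- Every nonzero matrix in Q_A can be carried by the action S ↦ MSM⁻¹ of U(2)^R = {M ∈ SO(4) : MJ = JM}, together with scaling by a positive real number, to the diagonal matrix S_x = diag(1, x, -1, -x) for some x ∈ [-1, 1]. -/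
/-!
Since `S` is symmetric and `S J = -J S`, the orthogonal map `J` sends `μ`-eigenvectors of `S` to
`(-μ)`-eigenvectors and negates the quadratic form of `S`. Hence the largest eigenvalue `a` of `S`
bounds `|⟪w, S w⟫| / ‖w‖²`, and `a > 0` as `S ≠ 0`. If `v` is a unit eigenvector for `a`, then `Jv`
is one for `-a`, and deflating `v` and `Jv` yields a unit eigenvector `u ⊥ v, Jv`, with eigenvalue
`b`, `|b| ≤ a`. The orthonormal rows `v, u, Jv, Ju` form a matrix commuting with `J`, whose
determinant is then `|det_ℂ|² = 1`, and which conjugates `S` to `diag(a, b, -a, -b)`; scaling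
by `a⁻¹` gives `x = b / a`.
-/

open Matrix

namespace Matrix

variable {n : Type*} [Fintype n]

lemma mul_mul_transpose_eq_diagonal [DecidableEq n] {R : Type*} [CommRing R]
    {A M : Matrix n n R} {d : n → R} (hM : M * Mᵀ = 1) (hA : ∀ i, A *ᵥ M i = d i • M i) :
    M * A * Mᵀ = diagonal d := by
  ext i j
  calc (M * A * Mᵀ) i j = M i ⬝ᵥ (A *ᵥ M j) := by rw [mul_assoc]; rfl
    _ = d j * (M * Mᵀ) i j := by rw [hA, dotProduct_smul, smul_eq_mul]; rfl
    _ = diagonal d i j := by by_cases h : i = j <;> simp [hM, h]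

lemma exists_ne_zero_dotProduct_eq_zero (hn : 2 < Fintype.card n) (v₁ v₂ : n → ℝ) :
    ∃ w ≠ 0, v₁ ⬝ᵥ w = 0 ∧ v₂ ⬝ᵥ w = 0 := by
  let f := (of ![v₁, v₂]).mulVecLin
  have hker : LinearMap.ker f ≠ ⊥ := LinearMap.ker_ne_bot_of_finrank_lt (by simpa using hn)
  obtain ⟨w, hw, hw0⟩ := (Submodule.ne_bot_iff _).mp hker
  have hfw := congrFun (LinearMap.mem_ker.mp hw)
  exact ⟨w, hw0, hfw 0, hfw 1⟩

namespace IsHermitian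

variable {A : Matrix n n ℝ}

lemma mulVec_dotProduct (hA : A.IsHermitian) (a b : n → ℝ) :
    (A *ᵥ a) ⬝ᵥ b = a ⬝ᵥ (A *ᵥ b) := by
  rw [dotProduct_mulVec, ← mulVec_transpose, (isHermitian_iff_isSymm.mp hA).eq]

lemma dotProduct_eq_zero_of_eigenvalue_ne (hA : A.IsHermitian) {a b : n → ℝ} {α β : ℝ}
    (ha : A *ᵥ a = α • a) (hb : A *ᵥ b = β • b) (hαβ : α ≠ β) : a ⬝ᵥ b = 0 := by
  have h : α * (a ⬝ᵥ b) = β * (a ⬝ᵥ b) := by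
    simpa [ha, hb] using hA.mulVec_dotProduct a b
  exact (mul_eq_mul_right_iff.mp h).resolve_left hαβ

lemma exists_eigenvector_forall_dotProduct_mulVec_le [DecidableEq n] [Nonempty n]
    (hA : A.IsHermitian) :
    ∃ (μ : ℝ) (v : n → ℝ), v ⬝ᵥ v = 1 ∧ A *ᵥ v = μ • v ∧
      ∀ w, w ⬝ᵥ (A *ᵥ w) ≤ μ * (w ⬝ᵥ w) := by
  obtain ⟨i, -, hi⟩ := Finset.univ.exists_max_image hA.eigenvalues Finset.univ_nonempty
  refine ⟨hA.eigenvalues i, hA.eigenvectorBasis i, ?_, hA.mulVec_eigenvectorBasis i, fun w => ?_⟩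
  · have h := orthonormal_iff_ite.mp hA.eigenvectorBasis.orthonormal i i
    rw [EuclideanSpace.inner_eq_star_dotProduct] at h
    simpa using h
  set U : Matrix n n ℝ := ↑hA.eigenvectorUnitary
  have hUU : U * Uᵀ = 1 := Unitary.coe_mul_star_self hA.eigenvectorUnitary
  have hAU : A = U * diagonal hA.eigenvalues * Uᵀ := by
    conv_lhs => rw [hA.spectral_theorem]
    simp [U]
    rfl
  set y := Uᵀ *ᵥ w
  have hy : y ⬝ᵥ y = w ⬝ᵥ w := by
    rw [dotProduct_mulVec, vecMul_transpose, mulVec_mulVec, hUU, one_mulVec, dotProduct_comm]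
  have hq : w ⬝ᵥ (A *ᵥ w) = ∑ j, hA.eigenvalues j * (y j * y j) := by
    conv_lhs => rw [hAU]
    rw [← mulVec_mulVec, ← mulVec_mulVec, dotProduct_mulVec, ← mulVec_transpose]
    simp only [dotProduct, mulVec_diagonal, y]
    exact Finset.sum_congr rfl fun j _ => by ring
  calc w ⬝ᵥ (A *ᵥ w) = ∑ j, hA.eigenvalues j * (y j * y j) := hq
    _ ≤ ∑ j, hA.eigenvalues i * (y j * y j) :=
      Finset.sum_le_sum fun j _ =>
        mul_le_mul_of_nonneg_right (hi j (Finset.mem_univ j)) (mul_self_nonneg _)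
    _ = hA.eigenvalues i * (w ⬝ᵥ w) := by rw [← Finset.mul_sum, ← hy]; rfl

lemma pos_of_forall_abs_dotProduct_mulVec_le (hA : A.IsHermitian) (hne : A ≠ 0) {μ : ℝ}
    (hμ : ∀ w, |w ⬝ᵥ (A *ᵥ w)| ≤ μ * (w ⬝ᵥ w)) : 0 < μ := by
  obtain ⟨x, t, ht, hx, hAx⟩ := hA.exists_eigenvector_of_ne_zero hne
  have hx' : 0 < x ⬝ᵥ x := by simpa using dotProduct_star_self_pos_iff.mpr hx
  have h := hμ x
  rw [hAx, dotProduct_smul, smul_eq_mul, abs_mul, abs_of_pos hx'] at h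
  exact pos_of_mul_pos_left ((mul_pos (abs_pos.mpr ht) hx').trans_le h) hx'.le

lemma exists_eigenvector_orthogonal_pair [DecidableEq n] (hA : A.IsHermitian)
    (hn : 2 < Fintype.card n) {v₁ v₂ : n → ℝ} {α₁ α₂ : ℝ}
    (h₁ : v₁ ⬝ᵥ v₁ = 1) (h₂ : v₂ ⬝ᵥ v₂ = 1) (h₁₂ : v₁ ⬝ᵥ v₂ = 0)
    (hv₁ : A *ᵥ v₁ = α₁ • v₁) (hv₂ : A *ᵥ v₂ = α₂ • v₂) :
    ∃ (μ : ℝ) (u : n → ℝ), u ⬝ᵥ u = 1 ∧ A *ᵥ u = μ • u ∧ v₁ ⬝ᵥ u = 0 ∧ v₂ ⬝ᵥ u = 0 := by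
  have : Nonempty n := Fintype.card_pos_iff.mp (by omega)
  obtain ⟨w, hw, hw₁, hw₂⟩ := exists_ne_zero_dotProduct_eq_zero hn v₁ v₂
  -- Shifting `v₁, v₂` below the Rayleigh quotient `r` of `w` makes the top eigenvector of the
  -- deflated matrix `T` orthogonal to both.
  set r := w ⬝ᵥ (A *ᵥ w) / (w ⬝ᵥ w)
  set c := max α₁ α₂ - r + 1
  set T := A - c • (vecMulVec v₁ v₁ + vecMulVec v₂ v₂)
  have hT : ∀ x, T *ᵥ x = A *ᵥ x - c • ((v₁ ⬝ᵥ x) • v₁ + (v₂ ⬝ᵥ x) • v₂) := by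
    intro x
    rw [sub_mulVec, smul_mulVec, add_mulVec, vecMulVec_mulVec, vecMulVec_mulVec]
    simp only [op_smul_eq_smul]
  have hTh : T.IsHermitian := by
    rw [isHermitian_iff_isSymm] at hA ⊢
    simp [T, IsSymm, transpose_vecMulVec, hA.eq]
  obtain ⟨μ, u, hu, hTu, hmax⟩ := hTh.exists_eigenvector_forall_dotProduct_mulVec_le
  have hrμ : r ≤ μ := by
    have hw' : 0 < w ⬝ᵥ w := by simpa using dotProduct_star_self_pos_iff.mpr hw
    have h := hmax w
    rw [hT, hw₁, hw₂] at h
    simp only [zero_smul, add_zero, smul_zero, sub_zero] at h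
    rwa [div_le_iff₀ hw']
  have hTv₁ : T *ᵥ v₁ = (α₁ - c) • v₁ := by
    rw [hT, hv₁, h₁, dotProduct_comm, h₁₂]; module
  have hTv₂ : T *ᵥ v₂ = (α₂ - c) • v₂ := by
    rw [hT, hv₂, h₂, h₁₂]; module
  have hu₁ : v₁ ⬝ᵥ u = 0 :=
    hTh.dotProduct_eq_zero_of_eigenvalue_ne hTv₁ hTu (by linarith [le_max_left α₁ α₂])
  have hu₂ : v₂ ⬝ᵥ u = 0 :=
    hTh.dotProduct_eq_zero_of_eigenvalue_ne hTv₂ hTu (by linarith [le_max_right α₁ α₂])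
  refine ⟨μ, u, hu, ?_, hu₁, hu₂⟩
  simpa [hT, hu₁, hu₂] using hTu

end IsHermitian

end Matrix

lemma Jmat_mulVec (a : Fin 4 → ℝ) : Jmat *ᵥ a = ![-a 2, -a 3, a 0, a 1] := by
  ext i
  fin_cases i <;> simp [Jmat, mulVec, dotProduct, Fin.sum_univ_four]

@[simp]
lemma Jmat_mulVec_dotProduct_Jmat_mulVec (a b : Fin 4 → ℝ) :
    (Jmat *ᵥ a) ⬝ᵥ (Jmat *ᵥ b) = a ⬝ᵥ b := by
  simp [Jmat_mulVec, dotProduct, Fin.sum_univ_four]; ring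

@[simp]
lemma dotProduct_Jmat_mulVec_self (a : Fin 4 → ℝ) : a ⬝ᵥ (Jmat *ᵥ a) = 0 := by
  simp [Jmat_mulVec, dotProduct, Fin.sum_univ_four]; ring

@[simp]
lemma Jmat_mulVec_dotProduct_self (a : Fin 4 → ℝ) : (Jmat *ᵥ a) ⬝ᵥ a = 0 := by
  rw [dotProduct_comm, dotProduct_Jmat_mulVec_self]

lemma dotProduct_Jmat_mulVec (a b : Fin 4 → ℝ) : a ⬝ᵥ (Jmat *ᵥ b) = -((Jmat *ᵥ a) ⬝ᵥ b) := by
  simp [Jmat_mulVec, dotProduct, Fin.sum_univ_four]; ring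

-- `M` is the realification of a complex `2 × 2` matrix `P + iQ`, so `det M = |det (P + iQ)|²`.
lemma det_nonneg_of_mul_Jmat_comm {M : Matrix (Fin 4) (Fin 4) ℝ} (h : M * Jmat = Jmat * M) :
    0 ≤ M.det := by
  have col₂ : ∀ i, M i 2 = (Jmat * M) i 0 := fun i => by
    rw [← h]; simp [Jmat, mul_apply, Fin.sum_univ_four]
  have col₃ : ∀ i, M i 3 = (Jmat * M) i 1 := fun i => by
    rw [← h]; simp [Jmat, mul_apply, Fin.sum_univ_four]
  have hM : M = !![M 0 0, M 0 1, -M 2 0, -M 2 1; M 1 0, M 1 1, -M 3 0, -M 3 1;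
      M 2 0, M 2 1, M 0 0, M 0 1; M 3 0, M 3 1, M 1 0, M 1 1] := by
    ext i j
    fin_cases i <;> fin_cases j <;> simp [col₂, col₃, Jmat, mul_apply, Fin.sum_univ_four]
  have hdet : M.det = (M 0 0 * M 1 1 - M 0 1 * M 1 0 - M 2 0 * M 3 1 + M 2 1 * M 3 0) ^ 2
      + (M 0 0 * M 3 1 + M 1 1 * M 2 0 - M 0 1 * M 3 0 - M 1 0 * M 2 1) ^ 2 := by
    rw [hM, det_succ_row_zero]
    simp [Fin.sum_univ_succ, det_fin_three, Fin.succAbove]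
    ring
  rw [hdet]
  positivity

lemma det_eq_one_of_mul_Jmat_comm {M : Matrix (Fin 4) (Fin 4) ℝ} (hM : M * Mᵀ = 1)
    (hMJ : M * Jmat = Jmat * M) : M.det = 1 := by
  have h := congrArg det hM
  rw [det_mul, det_transpose, det_one] at h
  nlinarith [det_nonneg_of_mul_Jmat_comm hMJ]

section Anticommuting

variable {S : Matrix (Fin 4) (Fin 4) ℝ} (hSJ : S * Jmat = -(Jmat * S))
include hSJ

lemma mulVec_Jmat_mulVec_of_anticomm (v : Fin 4 → ℝ) :
    S *ᵥ (Jmat *ᵥ v) = -(Jmat *ᵥ (S *ᵥ v)) := by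
  rw [mulVec_mulVec, hSJ, neg_mulVec, mulVec_mulVec]

lemma mulVec_Jmat_mulVec_of_eigen {v : Fin 4 → ℝ} {μ : ℝ} (hv : S *ᵥ v = μ • v) :
    S *ᵥ (Jmat *ᵥ v) = (-μ) • (Jmat *ᵥ v) := by
  rw [mulVec_Jmat_mulVec_of_anticomm hSJ, hv, mulVec_smul, neg_smul]

lemma exists_eigenvector_forall_abs_le_of_anticomm (hS : S.IsHermitian) :
    ∃ (μ : ℝ) (v : Fin 4 → ℝ), v ⬝ᵥ v = 1 ∧ S *ᵥ v = μ • v ∧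
      ∀ w, |w ⬝ᵥ (S *ᵥ w)| ≤ μ * (w ⬝ᵥ w) := by
  obtain ⟨μ, v, hv, hSv, hmax⟩ := hS.exists_eigenvector_forall_dotProduct_mulVec_le
  refine ⟨μ, v, hv, hSv, fun w => abs_le.mpr ⟨?_, hmax w⟩⟩
  have h := hmax (Jmat *ᵥ w)
  rw [mulVec_Jmat_mulVec_of_anticomm hSJ, dotProduct_neg, Jmat_mulVec_dotProduct_Jmat_mulVec,
    Jmat_mulVec_dotProduct_Jmat_mulVec] at h
  linarith

end Anticommuting

def unitaryFrame (v u : Fin 4 → ℝ) : Matrix (Fin 4) (Fin 4) ℝ :=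
  of ![v, u, Jmat *ᵥ v, Jmat *ᵥ u]

lemma unitaryFrame_mul_transpose {v u : Fin 4 → ℝ} (hv : v ⬝ᵥ v = 1) (hu : u ⬝ᵥ u = 1)
    (hvu : v ⬝ᵥ u = 0) (hJvu : (Jmat *ᵥ v) ⬝ᵥ u = 0) :
    unitaryFrame v u * (unitaryFrame v u)ᵀ = 1 := by
  have hvJu : v ⬝ᵥ (Jmat *ᵥ u) = 0 := by rw [dotProduct_Jmat_mulVec, hJvu, neg_zero]
  ext i j
  change ![v, u, Jmat *ᵥ v, Jmat *ᵥ u] i ⬝ᵥ ![v, u, Jmat *ᵥ v, Jmat *ᵥ u] j = _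
  fin_cases i <;> fin_cases j <;>
    simp [one_apply, dotProduct_comm u, dotProduct_comm (Jmat *ᵥ u) v, hv, hu, hvu, hJvu, hvJu]

lemma unitaryFrame_mul_Jmat (v u : Fin 4 → ℝ) :
    unitaryFrame v u * Jmat = Jmat * unitaryFrame v u := by
  ext i j
  fin_cases i <;> fin_cases j <;>
    simp [unitaryFrame, Jmat, mul_apply, Fin.sum_univ_four, vecHead, vecTail]

/-- Every nonzero matrix in Q_A can be carried, by conjugation by an element of
U(2)^R = {M ∈ SO(4) : MJ = JM} together with a positive scaling, to
S_x = diag(1, x, -1, -x) for some x ∈ [-1,1]. -/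
theorem stmt_13 (S : Matrix (Fin 4) (Fin 4) ℝ) (hS : Sᵀ = S)
    (hSJ : S * Jmat = -(Jmat * S)) (hne : S ≠ 0) :
    ∃ (M : Matrix (Fin 4) (Fin 4) ℝ) (c x : ℝ),
      Mᵀ * M = 1 ∧ M.det = 1 ∧ M * Jmat = Jmat * M ∧
      0 < c ∧ -1 ≤ x ∧ x ≤ 1 ∧
      c • (M * S * M⁻¹) = Matrix.diagonal ![1, x, -1, -x] := by
  have hSh : S.IsHermitian := isHermitian_iff_isSymm.mpr hS
  obtain ⟨a, v, hv, hSv, hbound⟩ := exists_eigenvector_forall_abs_le_of_anticomm hSJ hSh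
  have ha : 0 < a := hSh.pos_of_forall_abs_dotProduct_mulVec_le hne hbound
  obtain ⟨b, u, hu, hSu, hvu, hJvu⟩ := hSh.exists_eigenvector_orthogonal_pair (by simp) hv
    (by simpa using hv) (by simp) hSv (mulVec_Jmat_mulVec_of_eigen hSJ hSv)
  have hb : |b| ≤ a := by simpa [hSu, hu] using hbound u
  set M := unitaryFrame v u
  have hMM : M * Mᵀ = 1 := unitaryFrame_mul_transpose hv hu hvu hJvu
  have hMJ : M * Jmat = Jmat * M := unitaryFrame_mul_Jmat v u
  have hMSM : M * S * Mᵀ = diagonal ![a, b, -a, -b] := by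
    refine mul_mul_transpose_eq_diagonal hMM fun i => ?_
    fin_cases i
    exacts [hSv, hSu, mulVec_Jmat_mulVec_of_eigen hSJ hSv, mulVec_Jmat_mulVec_of_eigen hSJ hSu]
  obtain ⟨hb₁, hb₂⟩ := abs_le.mp (show |b / a| ≤ 1 by rwa [abs_div, abs_of_pos ha, div_le_one ha])
  refine ⟨M, a⁻¹, b / a, mul_eq_one_comm.mp hMM, det_eq_one_of_mul_Jmat_comm hMM hMJ, hMJ,
    inv_pos.mpr ha, hb₁, hb₂, ?_⟩
  rw [inv_eq_right_inv hMM, hMSM, ← diagonal_smul]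
  congr 1
  ext i
  fin_cases i <;> simp [ha.ne', div_eq_inv_mul]
end
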